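/- arXiv:1512.05931 — 6 statements merged into one kernel-verified Lean document; each statement's English description precedes it below -/
import Mathlib

section
/- Let X be a real Banach space and let a, b : X → X be bounded linear operators such that I − a and I − b are bijective, and set α = (I − a)⁻¹, β = (I − b)⁻¹. Then α ∘ (I + a∘b) ∘ β = (1/2) α ∘ (I + a) ∘ (I + b) ∘ β + (1/2) I. -/
/-!
Polarization: `1 + a b = ½ (1 + a)(1 + b) + ½ (1 - a)(1 - b)`. Conjugating by `α` on the left
and `β` on the right, the second summand collapses to `½` because `α (1 - a) = 1` and
`(1 - b) β = 1`.
-/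

section

variable {𝕜 A : Type*} [Field 𝕜] [NeZero (2 : 𝕜)] [Ring A] [Algebra 𝕜 A]

theorem one_add_mul_eq_half_smul_add_half_smul (a b : A) :
    1 + a * b = (1 / 2 : 𝕜) • ((1 + a) * (1 + b)) + (1 / 2 : 𝕜) • ((1 - a) * (1 - b)) := by
  rw [← smul_add]
  have hsum : (1 + a) * (1 + b) + (1 - a) * (1 - b) = (2 : 𝕜) • (1 + a * b) := by
    rw [two_smul]
    noncomm_ring
  rw [hsum, smul_smul, one_div, inv_mul_cancel₀ two_ne_zero, one_smul]

theorem mul_one_add_mul_mul_eq_of_mul_one_sub {a b α β : A}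
    (hα : α * (1 - a) = 1) (hβ : (1 - b) * β = 1) :
    α * (1 + a * b) * β = (1 / 2 : 𝕜) • (α * (1 + a) * (1 + b) * β) + (1 / 2 : 𝕜) • 1 := by
  have hmid : α * ((1 - a) * (1 - b)) * β = 1 := by
    rw [← mul_assoc, hα, one_mul, hβ]
  rw [one_add_mul_eq_half_smul_add_half_smul (𝕜 := 𝕜), mul_add, add_mul, mul_smul_comm,
    smul_mul_assoc, mul_smul_comm, smul_mul_assoc, hmid, ← mul_assoc]

end

theorem douglas_rachford_stability_identity_general
    {X : Type*} [NormedAddCommGroup X] [NormedSpace ℝ X]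
    (a b α β : X →L[ℝ] X)
    (hα₁ : α ∘L (1 - a) = 1)
    (hβ₂ : (1 - b) ∘L β = 1) :
    α ∘L (1 + a ∘L b) ∘L β =
      (1 / 2 : ℝ) • (α ∘L (1 + a) ∘L (1 + b) ∘L β) + (1 / 2 : ℝ) • 1 := by
  simp only [← ContinuousLinearMap.mul_def] at hα₁ hβ₂ ⊢
  simpa only [mul_assoc] using mul_one_add_mul_mul_eq_of_mul_one_sub (𝕜 := ℝ) hα₁ hβ₂

/-- Let `X` be a real Banach space, `a b : X → X` bounded linear
operators with `I - a` and `I - b` bijective, and `α = (I - a)⁻¹`, `β = (I - b)⁻¹`.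
Then `α ∘ (I + a∘b) ∘ β = (1/2) α ∘ (I + a) ∘ (I + b) ∘ β + (1/2) I`. -/
theorem douglas_rachford_stability_identity
    {X : Type*} [NormedAddCommGroup X] [NormedSpace ℝ X] [CompleteSpace X]
    (a b α β : X →L[ℝ] X)
    (hα₁ : α ∘L (1 - a) = 1) (hα₂ : (1 - a) ∘L α = 1)
    (hβ₁ : β ∘L (1 - b) = 1) (hβ₂ : (1 - b) ∘L β = 1) :
    α ∘L (1 + a ∘L b) ∘L β =
      (1 / 2 : ℝ) • (α ∘L (1 + a) ∘L (1 + b) ∘L β) + (1 / 2 : ℝ) • 1 :=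
  douglas_rachford_stability_identity_general a b α β hα₁ hβ₂
end

section
/- Let H be a real Hilbert space, k > 0, and let A, B : H → H be bounded dissipative linear operators. Let S = (I − kB)⁻¹ ∘ (I − kA)⁻¹ ∘ (I + k² A∘B) be the Douglas–Rachford operator. Then for every n ∈ ℕ the operator Sⁿ ∘ (I − kB)⁻¹ is nonexpansive, i.e. ‖Sⁿ((I − kB)⁻¹ v)‖ ≤ ‖v‖ for all v ∈ H. -/
open scoped RealInnerProductSpace

/-!
With the resolvents `α = (1 - kA)⁻¹`, `β = (1 - kB)⁻¹`, put `M = α (1 + k²AB) β`. Then `S β = β M`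
by associativity, hence `Sⁿ β = β Mⁿ`, and it suffices that `β` and `M` are nonexpansive.
A purely ring-theoretic computation gives `2M = (2α - 1)(2β - 1) + 1`, where `2α - 1` and
`2β - 1` are the Cayley transforms `(1 + kA)(1 - kA)⁻¹` and `(1 + kB)(1 - kB)⁻¹`. For a
dissipative `C` and `k ≥ 0`, expanding squares gives `‖w + kCw‖ ≤ ‖w - kCw‖` and
`‖w‖ ≤ ‖w - kCw‖`, so Cayley transforms and resolvents are nonexpansive, and so is `M`,
being the average of a nonexpansive operator and the identity.
-/

theorem two_mul_mul_one_add_mul_mul {R : Type*} [Ring R] {a b x y : R}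
    (hx : x * (1 - a) = 1) (hy : (1 - b) * y = 1) :
    2 * (x * (1 + a * b) * y) = (2 * x - 1) * (2 * y - 1) + 1 := by
  have hxa : x * a = x - 1 := by rw [← hx]; noncomm_ring
  have hby : b * y = y - 1 := by rw [← hy]; noncomm_ring
  calc 2 * (x * (1 + a * b) * y) = 2 * (x * y + x * a * (b * y)) := by noncomm_ring
    _ = (2 * x - 1) * (2 * y - 1) + 1 := by rw [hxa, hby]; noncomm_ring

namespace ContinuousLinearMap

section NormedSpace

variable {E : Type*} [NormedAddCommGroup E] [NormedSpace ℝ E]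

theorem norm_pow_le_one {T : E →L[ℝ] E} (hT : ‖T‖ ≤ 1) (n : ℕ) : ‖T ^ n‖ ≤ 1 := by
  induction n with
  | zero => exact norm_id_le
  | succ n ih =>
    rw [pow_succ]
    exact (norm_mul_le _ _).trans (mul_le_one₀ ih (norm_nonneg _) hT)

theorem norm_le_one_of_two_mul_eq_mul_add_one {M T U : E →L[ℝ] E} (hT : ‖T‖ ≤ 1)
    (hU : ‖U‖ ≤ 1) (hM : 2 * M = T * U + 1) : ‖M‖ ≤ 1 := by
  have h2M : ‖(2 : ℝ) • M‖ ≤ 1 + 1 := by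
    rw [two_smul, ← two_mul, hM]
    exact norm_add_le_of_le ((norm_mul_le _ _).trans (mul_le_one₀ hT (norm_nonneg _) hU)) norm_id_le
  rw [norm_smul, Real.norm_two] at h2M
  linarith

end NormedSpace

variable {H : Type*} [NormedAddCommGroup H] [InnerProductSpace ℝ H]

def IsDissipative (C : H →L[ℝ] H) : Prop := ∀ v, ⟪C v, v⟫ ≤ 0

namespace IsDissipative

variable {C : H →L[ℝ] H} {k : ℝ}

theorem norm_add_smul_le_norm_sub_smul (hC : C.IsDissipative) (hk : 0 ≤ k) (v : H) :
    ‖v + k • C v‖ ≤ ‖v - k • C v‖ := by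
  rw [← sq_le_sq₀ (norm_nonneg _) (norm_nonneg _), norm_add_sq_real, norm_sub_sq_real,
    real_inner_smul_right, real_inner_comm]
  nlinarith [hC v]

theorem norm_le_norm_sub_smul (hC : C.IsDissipative) (hk : 0 ≤ k) (v : H) :
    ‖v‖ ≤ ‖v - k • C v‖ := by
  rw [← sq_le_sq₀ (norm_nonneg _) (norm_nonneg _), norm_sub_sq_real,
    real_inner_smul_right, real_inner_comm]
  nlinarith [hC v, sq_nonneg ‖k • C v‖]

theorem norm_resolvent_le_one (hC : C.IsDissipative) (hk : 0 ≤ k) {R : H →L[ℝ] H}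
    (hR : (1 - k • C) * R = 1) : ‖R‖ ≤ 1 := by
  refine opNorm_le_bound _ zero_le_one fun v => ?_
  have hv : R v - k • C (R v) = v := by simpa using congr($hR v)
  simpa [hv] using hC.norm_le_norm_sub_smul hk (R v)

theorem norm_cayley_le_one (hC : C.IsDissipative) (hk : 0 ≤ k) {R : H →L[ℝ] H}
    (hR : (1 - k • C) * R = 1) : ‖2 * R - 1‖ ≤ 1 := by
  refine opNorm_le_bound _ zero_le_one fun v => ?_
  have hv : R v - k • C (R v) = v := by simpa using congr($hR v)
  have hcayley : (2 * R - 1) v = R v + k • C (R v) := by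
    rw [sub_apply, two_mul, add_apply, one_apply_eq_self]
    nth_rw 3 [← hv]
    abel
  simpa [hcayley, hv] using hC.norm_add_smul_le_norm_sub_smul hk (R v)

end IsDissipative

end ContinuousLinearMap

theorem douglas_rachford_power_nonexpansive_general
    {H : Type*} [NormedAddCommGroup H] [InnerProductSpace ℝ H]
    (A B : H →L[ℝ] H)
    (hA : ∀ v : H, ⟪A v, v⟫ ≤ 0) (hB : ∀ v : H, ⟪B v, v⟫ ≤ 0)
    (k : ℝ) (hk : 0 < k)
    (α β : H →L[ℝ] H)
    (hα₁ : α ∘L (1 - k • A) = 1) (hα₂ : (1 - k • A : H →L[ℝ] H) ∘L α = 1)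
    (hβ₂ : (1 - k • B : H →L[ℝ] H) ∘L β = 1)
    (S : H →L[ℝ] H) (hS : S = β ∘L α ∘L (1 + k ^ 2 • (A ∘L B))) :
    ∀ (n : ℕ) (v : H), ‖(S ^ n) (β v)‖ ≤ ‖v‖ := by
  intro n v
  set M := α * (1 + (k • A) * (k • B)) * β
  have hSβ : SemiconjBy β M S := by
    rw [SemiconjBy, hS]
    simp only [M, smul_mul_smul_comm, ← sq]
    rfl
  have hM : ‖M‖ ≤ 1 := ContinuousLinearMap.norm_le_one_of_two_mul_eq_mul_add_one
    (ContinuousLinearMap.IsDissipative.norm_cayley_le_one hA hk.le hα₂)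
    (ContinuousLinearMap.IsDissipative.norm_cayley_le_one hB hk.le hβ₂)
    (two_mul_mul_one_add_mul_mul hα₁ hβ₂)
  have hβ : ‖β‖ ≤ 1 := ContinuousLinearMap.IsDissipative.norm_resolvent_le_one hB hk.le hβ₂
  calc ‖(S ^ n) (β v)‖ = ‖(β * M ^ n) v‖ := by rw [(hSβ.pow_right n).eq]; rfl
    _ ≤ 1 * ‖v‖ := (β * M ^ n).le_of_opNorm_le
        ((norm_mul_le _ _).trans (mul_le_one₀ hβ (norm_nonneg _) (M.norm_pow_le_one hM n))) v
    _ = ‖v‖ := one_mul _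

/-- Let `H` be a real Hilbert space, `k > 0`, and `A, B` bounded
dissipative linear operators. With `α = (I - kA)⁻¹`, `β = (I - kB)⁻¹` and the
Douglas–Rachford operator `S = β ∘ α ∘ (I + k² A∘B)`, the operator `Sⁿ ∘ β` is
nonexpansive for every `n ∈ ℕ`. -/
theorem douglas_rachford_power_nonexpansive
    {H : Type*} [NormedAddCommGroup H] [InnerProductSpace ℝ H] [CompleteSpace H]
    (A B : H →L[ℝ] H)
    (hA : ∀ v : H, ⟪A v, v⟫ ≤ 0) (hB : ∀ v : H, ⟪B v, v⟫ ≤ 0)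
    (k : ℝ) (hk : 0 < k)
    (α β : H →L[ℝ] H)
    (hα₁ : α ∘L (1 - k • A) = 1) (hα₂ : (1 - k • A : H →L[ℝ] H) ∘L α = 1)
    (hβ₁ : β ∘L (1 - k • B) = 1) (hβ₂ : (1 - k • B : H →L[ℝ] H) ∘L β = 1)
    (S : H →L[ℝ] H) (hS : S = β ∘L α ∘L (1 + k ^ 2 • (A ∘L B))) :
    ∀ (n : ℕ) (v : H), ‖(S ^ n) (β v)‖ ≤ ‖v‖ :=
  douglas_rachford_power_nonexpansive_general A B hA hB k hk α β hα₁ hα₂ hβ₂ S hS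
end

section
/- Let H be a real Hilbert space, k > 0, and let A, B : H → H be bounded dissipative linear operators such that L = A + B is bijective. Let S = (I − kB)⁻¹ ∘ (I − kA)⁻¹ ∘ (I + k² A∘B). Then for every η ∈ H: (I − kB)(exp(kL)η − Sη) = −(I − kA)⁻¹ (∫₀ᵏ τ · exp(τL)(L²η) dτ) + k² · A((I − kA)⁻¹(B(L⁻¹(∫₀ᵏ exp(τL)(L²η) dτ)))), where the integrals are Bochner integrals of the continuous H-valued integrands. -/
/-!
Both integrals are expressed through `x = exp(kL)η - η` by the fundamental theorem of calculus:
`∫₀ᵏ exp(τL) L²η dτ = L x`, so that `L⁻¹` of it is `x`, and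
`∫₀ᵏ τ exp(τL) L²η dτ = k L exp(kL)η - x`. What remains is an algebraic identity
that holds with `exp(kL)η` replaced by any vector `e`; it is checked after applying the injective
map `I - kA`, using `(I - kB) β = I`, `(I - kA) α = I` and that `A` commutes with `I - kA`.
-/

open NormedSpace intervalIntegral

section Exponential

variable {E : Type*} [NormedAddCommGroup E] [NormedSpace ℝ E] [CompleteSpace E]

theorem hasDerivAt_exp_smul_apply (L : E →L[ℝ] E) (v : E) (t : ℝ) :
    HasDerivAt (fun τ : ℝ => exp (τ • L) v) (exp (t • L) (L v)) t := by
  simpa using (hasDerivAt_exp_smul_const (𝕂 := ℝ) L t).clm_apply (hasDerivAt_const t v)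

theorem continuous_exp_smul_apply (L : E →L[ℝ] E) (v : E) :
    Continuous fun τ : ℝ => exp (τ • L) v :=
  continuous_iff_continuousAt.2 fun t => (hasDerivAt_exp_smul_apply L v t).continuousAt

omit [CompleteSpace E] in
theorem exp_smul_apply_comm (L : E →L[ℝ] E) (t : ℝ) (v : E) :
    exp (t • L) (L v) = L (exp (t • L) v) :=
  congrArg (· v) ((Commute.refl L).smul_left t).exp_left.eq

theorem integral_exp_smul_apply (L : E →L[ℝ] E) (v : E) (k : ℝ) :
    ∫ τ in (0:ℝ)..k, exp (τ • L) (L v) = exp (k • L) v - v := by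
  simpa using integral_eq_sub_of_hasDerivAt (fun t _ => hasDerivAt_exp_smul_apply L v t)
    ((continuous_exp_smul_apply L (L v)).intervalIntegrable 0 k)

theorem integral_smul_exp_smul_apply (L : E →L[ℝ] E) (v : E) (k : ℝ) :
    ∫ τ in (0:ℝ)..k, τ • exp (τ • L) (L (L v)) =
      k • exp (k • L) (L v) - (exp (k • L) v - v) := by
  have hderiv (t : ℝ) : HasDerivAt (fun τ : ℝ => τ • exp (τ • L) (L v) - exp (τ • L) v)
      (t • exp (t • L) (L (L v))) t := by
    convert ((hasDerivAt_id' t).fun_smul (hasDerivAt_exp_smul_apply L (L v) t)).fun_sub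
      (hasDerivAt_exp_smul_apply L v t) using 1
    simp
  rw [integral_eq_sub_of_hasDerivAt (fun t _ => hderiv t)
    ((continuous_id.smul (continuous_exp_smul_apply L (L (L v)))).intervalIntegrable 0 k)]
  simp only [zero_smul, exp_zero, one_apply_eq_self, zero_sub, sub_neg_eq_add]
  abel

end Exponential

theorem douglasRachford_residual_eq {R M : Type*} [CommRing R] [AddCommGroup M] [Module R M]
    (A B α β : Module.End R M) (k : R)
    (hα₁ : α * (1 - k • A) = 1) (hα₂ : (1 - k • A) * α = 1) (hβ : (1 - k • B) * β = 1)
    (e η : M) :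
    (1 - k • B) (e - β (α (η + k ^ 2 • A (B η)))) =
      -α (k • (A + B) e - (e - η)) + k ^ 2 • A (α (B (e - η))) := by
  have hα_left (x : M) : α ((1 - k • A) x) = x := by simpa using congrArg (· x) hα₁
  have hα_right (x : M) : (1 - k • A) (α x) = x := by simpa using congrArg (· x) hα₂
  have hβ_right (x : M) : (1 - k • B) (β x) = x := by simpa using congrArg (· x) hβ
  have hA_α (x : M) : (1 - k • A) (A (α x)) = A x := by
    conv_rhs => rw [← hα_right x]
    simp
  rw [map_sub, hβ_right]
  apply Function.LeftInverse.injective hα_left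
  simp only [map_add, map_sub, map_neg, map_smul, hα_right, hA_α, LinearMap.sub_apply,
    LinearMap.smul_apply, Module.End.one_apply, LinearMap.add_apply]
  module

open scoped RealInnerProductSpace

theorem douglas_rachford_local_error_representation_general
    {H : Type*} [NormedAddCommGroup H] [InnerProductSpace ℝ H] [CompleteSpace H]
    (A B : H →L[ℝ] H)
    (k : ℝ)
    (L : H →L[ℝ] H) (hL : L = A + B)
    (Linv : H →L[ℝ] H) (hLinv₁ : Linv ∘L L = 1)
    (α β : H →L[ℝ] H)
    (hα₁ : α ∘L (1 - k • A) = 1) (hα₂ : (1 - k • A : H →L[ℝ] H) ∘L α = 1)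
    (hβ₂ : (1 - k • B : H →L[ℝ] H) ∘L β = 1)
    (S : H →L[ℝ] H) (hS : S = β ∘L α ∘L (1 + k ^ 2 • (A ∘L B)))
    (η : H) :
    (1 - k • B : H →L[ℝ] H) ((NormedSpace.exp (k • L)) η - S η) =
      -(α (∫ τ in (0:ℝ)..k, τ • (NormedSpace.exp (τ • L)) (L (L η)))) +
        k ^ 2 •
          A (α (B (Linv (∫ τ in (0:ℝ)..k, (NormedSpace.exp (τ • L)) (L (L η)))))) := by
  have hLinv (x : H) : Linv (L x) = x := congrArg (· x) hLinv₁
  rw [integral_smul_exp_smul_apply, integral_exp_smul_apply, exp_smul_apply_comm,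
    ← map_sub, hLinv]
  have key := douglasRachford_residual_eq A.toLinearMap B.toLinearMap α.toLinearMap
    β.toLinearMap k (by ext x; simpa using congrArg (· x) hα₁)
    (by ext x; simpa using congrArg (· x) hα₂) (by ext x; simpa using congrArg (· x) hβ₂)
    (exp (k • L) η) η
  subst hL hS
  simpa using key

/-- The local (one-step) error representation of the
Douglas–Rachford splitting: with `L = A + B` bijective (inverse `Linv`),
`α = (I - kA)⁻¹`, `β = (I - kB)⁻¹` and `S = β ∘ α ∘ (I + k² A∘B)`, for every `η`:
`(I - kB)(exp(kL)η - Sη) = -α(∫₀ᵏ τ • exp(τL) L²η dτ)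
 + k² • A(α(B(L⁻¹(∫₀ᵏ exp(τL) L²η dτ))))`. -/
theorem douglas_rachford_local_error_representation
    {H : Type*} [NormedAddCommGroup H] [InnerProductSpace ℝ H] [CompleteSpace H]
    (A B : H →L[ℝ] H)
    (hA : ∀ v : H, ⟪A v, v⟫ ≤ 0) (hB : ∀ v : H, ⟪B v, v⟫ ≤ 0)
    (k : ℝ) (hk : 0 < k)
    (L : H →L[ℝ] H) (hL : L = A + B)
    (Linv : H →L[ℝ] H) (hLinv₁ : Linv ∘L L = 1) (hLinv₂ : L ∘L Linv = 1)
    (α β : H →L[ℝ] H)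
    (hα₁ : α ∘L (1 - k • A) = 1) (hα₂ : (1 - k • A : H →L[ℝ] H) ∘L α = 1)
    (hβ₁ : β ∘L (1 - k • B) = 1) (hβ₂ : (1 - k • B : H →L[ℝ] H) ∘L β = 1)
    (S : H →L[ℝ] H) (hS : S = β ∘L α ∘L (1 + k ^ 2 • (A ∘L B)))
    (η : H) :
    (1 - k • B : H →L[ℝ] H) ((NormedSpace.exp (k • L)) η - S η) =
      -(α (∫ τ in (0:ℝ)..k, τ • (NormedSpace.exp (τ • L)) (L (L η)))) +
        k ^ 2 •
          A (α (B (Linv (∫ τ in (0:ℝ)..k, (NormedSpace.exp (τ • L)) (L (L η)))))) :=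
  douglas_rachford_local_error_representation_general A B k L hL Linv hLinv₁ α β hα₁ hα₂ hβ₂ S hS η
end

section
/- Let N, M ≥ 1, let D₁ be a real diagonal N×N matrix with diagonal entries in [a₀, a₁] and D₂ a real diagonal M×M matrix with diagonal entries in [b₀, b₁], where 0 < a₀ ≤ a₁ and 0 < b₀ ≤ b₁. Let K₁ be a symmetric positive definite real N×N matrix and K₂ a symmetric positive definite real M×M matrix. Set K_A = K₁ ⊗ D₂ and K_B = D₁ ⊗ K₂ (Kronecker products, of size NM × NM). Then K_A + K_B is invertible and ‖K_A (K_A + K_B)⁻¹‖₂ ≤ √((a₁ b₁)/(a₀ b₀)), where ‖·‖₂ denotes the operator norm on matrices induced by the Euclidean norm. -/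
/-!
With `E = D₁^{1/2} ⊗ D₂^{1/2}` and `K̂ᵢ = Dᵢ^{-1/2} Kᵢ Dᵢ^{-1/2}`, one has
`K_A (K_A + K_B)⁻¹ = E (Â (Â + B̂)⁻¹) E⁻¹` where `Â = K̂₁ ⊗ I` and `B̂ = I ⊗ K̂₂`.
The product `Â B̂ = K̂₁ ⊗ K̂₂` is positive semidefinite, so the cross term in
`‖(Â + B̂) y‖² = ‖Â y‖² + 2 Re ⟪Â y, B̂ y⟫ + ‖B̂ y‖²` is nonnegative and `‖Â (Â + B̂)⁻¹‖ ≤ 1`.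
The diagonal factors satisfy `‖E‖ ≤ √(a₁ b₁)` and `‖E⁻¹‖ ≤ 1 / √(a₀ b₀)`.
-/

open Matrix
open scoped Kronecker Matrix.Norms.L2Operator InnerProductSpace ComplexOrder

theorem LinearMap.norm_apply_le_norm_add_apply {𝕜 E : Type*} [RCLike 𝕜] [NormedAddCommGroup E]
    [InnerProductSpace 𝕜 E] {T S : E →ₗ[𝕜] E} (hT : T.IsSymmetric) (hTS : (T ∘ₗ S).IsPositive)
    (x : E) : ‖T x‖ ≤ ‖(T + S) x‖ := by
  have hcross : 0 ≤ RCLike.re ⟪T x, S x⟫_𝕜 := by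
    rw [hT]
    exact hTS.re_inner_nonneg_right x
  have hsq : ‖T x‖ ^ 2 ≤ ‖(T + S) x‖ ^ 2 := by
    rw [add_apply, norm_add_sq (𝕜 := 𝕜)]
    linarith [sq_nonneg ‖S x‖]
  exact (sq_le_sq₀ (norm_nonneg _) (norm_nonneg _)).mp hsq

namespace Matrix

section CommRing

variable {R : Type*} [CommRing R] {n : Type*} [Fintype n] [DecidableEq n]

theorem mul_inv_add_eq_of_mul_eq_one {A B E F : Matrix n n R} (hEF : E * F = 1) :
    A * (A + B)⁻¹ = E * (F * A * F * (F * A * F + F * B * F)⁻¹) * F := by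
  have hFE : F * E = 1 := mul_eq_one_comm.mp hEF
  rw [show F * A * F + F * B * F = F * (A + B) * F by noncomm_ring, mul_inv_rev, mul_inv_rev,
    inv_eq_left_inv hEF]
  simp only [mul_assoc]
  rw [hEF, mul_one, ← mul_assoc F E, hFE, one_mul, ← mul_assoc E F, hEF, one_mul]

theorem PosSemidef.diagonal_mul_mul_diagonal [PartialOrder R] [StarRing R] [TrivialStar R]
    {A : Matrix n n R} (hA : A.PosSemidef) (v : n → R) :
    (diagonal v * A * diagonal v).PosSemidef := by
  simpa [diagonal_conjTranspose] using hA.conjTranspose_mul_mul_same (diagonal v)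

end CommRing

section Field

variable {K : Type*} [Field K] {n : Type*} [Fintype n] [DecidableEq n]

theorem diagonal_mul_diagonal_inv {s : n → K} (hs : ∀ i, s i ≠ 0) :
    diagonal s * diagonal s⁻¹ = 1 := by
  rw [diagonal_mul_diagonal, ← diagonal_one]
  congr 1
  funext i
  exact mul_inv_cancel₀ (hs i)

theorem diagonal_inv_mul_diagonal_mul_diagonal_inv {s d : n → K} (hs : ∀ i, s i ≠ 0)
    (hsd : ∀ i, s i * s i = d i) : diagonal s⁻¹ * diagonal d * diagonal s⁻¹ = 1 := by
  rw [diagonal_mul_diagonal, diagonal_mul_diagonal, ← diagonal_one]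
  congr 1
  funext i
  rw [Pi.inv_apply, ← hsd i]
  field_simp [hs i]

variable {m : Type*} [Fintype m] [DecidableEq m]

theorem kronecker_mul_inv_add_eq {s₁ d₁ : m → K} {s₂ d₂ : n → K} (hs₁ : ∀ i, s₁ i ≠ 0)
    (hs₂ : ∀ j, s₂ j ≠ 0) (hsd₁ : ∀ i, s₁ i * s₁ i = d₁ i) (hsd₂ : ∀ j, s₂ j * s₂ j = d₂ j)
    (K₁ : Matrix m m K) (K₂ : Matrix n n K) :
    (K₁ ⊗ₖ diagonal d₂) * (K₁ ⊗ₖ diagonal d₂ + diagonal d₁ ⊗ₖ K₂)⁻¹ =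
      (diagonal s₁ ⊗ₖ diagonal s₂) *
        ((diagonal s₁⁻¹ * K₁ * diagonal s₁⁻¹) ⊗ₖ 1 *
          ((diagonal s₁⁻¹ * K₁ * diagonal s₁⁻¹) ⊗ₖ 1 +
            1 ⊗ₖ (diagonal s₂⁻¹ * K₂ * diagonal s₂⁻¹))⁻¹) *
        (diagonal s₁⁻¹ ⊗ₖ diagonal s₂⁻¹) := by
  have hEF : (diagonal s₁ ⊗ₖ diagonal s₂) * (diagonal s₁⁻¹ ⊗ₖ diagonal s₂⁻¹) = 1 := by
    rw [← mul_kronecker_mul, diagonal_mul_diagonal_inv hs₁, diagonal_mul_diagonal_inv hs₂,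
      one_kronecker_one]
  rw [mul_inv_add_eq_of_mul_eq_one hEF, ← mul_kronecker_mul, ← mul_kronecker_mul,
    ← mul_kronecker_mul, ← mul_kronecker_mul, diagonal_inv_mul_diagonal_mul_diagonal_inv hs₁ hsd₁,
    diagonal_inv_mul_diagonal_mul_diagonal_inv hs₂ hsd₂]

end Field

variable {𝕜 : Type*} [RCLike 𝕜] {m n : Type*} [Fintype m] [Fintype n] [DecidableEq m]
  [DecidableEq n]

theorem toEuclideanLin_mul (A B : Matrix n n 𝕜) :
    toEuclideanLin (A * B) = toEuclideanLin A ∘ₗ toEuclideanLin B := by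
  ext x : 1
  simp

theorem l2_opNorm_mul_inv_add_le_one {A B : Matrix n n 𝕜} (hA : A.IsHermitian)
    (hAB : (A * B).PosSemidef) : ‖A * (A + B)⁻¹‖ ≤ 1 := by
  by_cases h : IsUnit (A + B).det
  · have hpos : (toEuclideanLin A ∘ₗ toEuclideanLin B).IsPositive := by
      rw [← toEuclideanLin_mul]
      exact isPositive_toEuclideanLin_iff.mpr hAB
    rw [cstar_norm_def]
    refine ContinuousLinearMap.opNorm_le_bound _ zero_le_one fun x => ?_
    obtain ⟨y, rfl⟩ : ∃ y, toEuclideanCLM (𝕜 := 𝕜) (A + B) y = x :=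
      ⟨toEuclideanCLM (𝕜 := 𝕜) (A + B)⁻¹ x, by
        rw [← mul_apply_eq_comp, ← map_mul, mul_nonsing_inv _ h, map_one, one_apply_eq_self]⟩
    rw [← mul_apply_eq_comp, ← map_mul, mul_assoc, nonsing_inv_mul _ h, mul_one, one_mul, map_add]
    exact LinearMap.norm_apply_le_norm_add_apply (isSymmetric_toEuclideanLin_iff.mpr hA) hpos y
  · simp [nonsing_inv_apply_not_isUnit _ h]

theorem l2_opNorm_kronecker_one_mul_inv_le_one {X : Matrix m m 𝕜} {Y : Matrix n n 𝕜}
    (hX : X.PosSemidef) (hY : Y.PosSemidef) :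
    ‖(X ⊗ₖ (1 : Matrix n n 𝕜)) * (X ⊗ₖ 1 + 1 ⊗ₖ Y)⁻¹‖ ≤ 1 := by
  refine l2_opNorm_mul_inv_add_le_one (hX.kronecker .one).isHermitian ?_
  rw [← mul_kronecker_mul, mul_one, one_mul]
  exact hX.kronecker hY

theorem l2_opNorm_diagonal_kronecker_diagonal_le (u : m → 𝕜) (v : n → 𝕜) :
    ‖diagonal u ⊗ₖ diagonal v‖ ≤ ‖u‖ * ‖v‖ := by
  rw [diagonal_kronecker_diagonal, l2_opNorm_diagonal]
  refine (pi_norm_le_iff_of_nonneg (by positivity)).mpr fun p => ?_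
  rw [norm_mul]
  exact mul_le_mul (norm_le_pi_norm u p.1) (norm_le_pi_norm v p.2) (norm_nonneg _) (norm_nonneg _)

end Matrix

theorem pi_norm_sqrt_le {n : Type*} [Fintype n] {d : n → ℝ} {a : ℝ}
    (hd : ∀ i, d i ≤ a) : ‖fun i => √(d i)‖ ≤ √a :=
  (pi_norm_le_iff_of_nonneg (Real.sqrt_nonneg a)).mpr fun i => by
    rw [Real.norm_of_nonneg (Real.sqrt_nonneg _)]
    exact Real.sqrt_le_sqrt (hd i)

theorem pi_norm_inv_sqrt_le {n : Type*} [Fintype n] {d : n → ℝ} {a : ℝ} (ha : 0 < a)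
    (hd : ∀ i, a ≤ d i) : ‖fun i => (√(d i))⁻¹‖ ≤ (√a)⁻¹ :=
  (pi_norm_le_iff_of_nonneg (by positivity)).mpr fun i => by
    rw [Real.norm_of_nonneg (by positivity)]
    exact inv_anti₀ (Real.sqrt_pos.mpr ha) (Real.sqrt_le_sqrt (hd i))

theorem kronecker_stability_bound_general
    (N M : ℕ)
    (a₀ a₁ b₀ b₁ : ℝ) (ha₀ : 0 < a₀) (ha : a₀ ≤ a₁) (hb₀ : 0 < b₀)
    (d₁ : Fin N → ℝ) (hd₁ : ∀ i, d₁ i ∈ Set.Icc a₀ a₁)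
    (d₂ : Fin M → ℝ) (hd₂ : ∀ j, d₂ j ∈ Set.Icc b₀ b₁)
    (K₁ : Matrix (Fin N) (Fin N) ℝ) (hK₁ : K₁.PosDef)
    (K₂ : Matrix (Fin M) (Fin M) ℝ) (hK₂ : K₂.PosDef)
    (KA KB : Matrix (Fin N × Fin M) (Fin N × Fin M) ℝ)
    (hKA : KA = K₁ ⊗ₖ Matrix.diagonal d₂)
    (hKB : KB = Matrix.diagonal d₁ ⊗ₖ K₂) :
    IsUnit (KA + KB) ∧
      ‖Matrix.toEuclideanCLM (𝕜 := ℝ) (KA * (KA + KB)⁻¹)‖ ≤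
        Real.sqrt ((a₁ * b₁) / (a₀ * b₀)) := by
  subst hKA hKB
  have hd₁pos : ∀ i, 0 < d₁ i := fun i => ha₀.trans_le (hd₁ i).1
  have hd₂pos : ∀ j, 0 < d₂ j := fun j => hb₀.trans_le (hd₂ j).1
  refine ⟨PosDef.posSemidef_add (hK₁.posSemidef.kronecker (.diagonal fun j => (hd₂pos j).le))
    ((PosDef.diagonal hd₁pos).kronecker hK₂) |>.isUnit, ?_⟩
  set s₁ : Fin N → ℝ := fun i => √(d₁ i)
  set s₂ : Fin M → ℝ := fun j => √(d₂ j)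
  have hE : ‖diagonal s₁ ⊗ₖ diagonal s₂‖ ≤ √a₁ * √b₁ :=
    (l2_opNorm_diagonal_kronecker_diagonal_le _ _).trans <| mul_le_mul
      (pi_norm_sqrt_le fun i => (hd₁ i).2) (pi_norm_sqrt_le fun j => (hd₂ j).2)
      (norm_nonneg _) (Real.sqrt_nonneg _)
  have hF : ‖diagonal s₁⁻¹ ⊗ₖ diagonal s₂⁻¹‖ ≤ (√a₀)⁻¹ * (√b₀)⁻¹ :=
    (l2_opNorm_diagonal_kronecker_diagonal_le _ _).trans <| mul_le_mul
      (pi_norm_inv_sqrt_le ha₀ fun i => (hd₁ i).1) (pi_norm_inv_sqrt_le hb₀ fun j => (hd₂ j).1)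
      (norm_nonneg _) (by positivity)
  rw [← cstar_norm_def, kronecker_mul_inv_add_eq (s₁ := s₁) (s₂ := s₂)
    (fun i => Real.sqrt_ne_zero'.mpr (hd₁pos i)) (fun j => Real.sqrt_ne_zero'.mpr (hd₂pos j))
    (fun i => Real.mul_self_sqrt (hd₁pos i).le) (fun j => Real.mul_self_sqrt (hd₂pos j).le)]
  calc _ ≤ (√a₁ * √b₁) * 1 * ((√a₀)⁻¹ * (√b₀)⁻¹) := by
        grw [norm_mul_le, norm_mul_le, hE, hF, l2_opNorm_kronecker_one_mul_inv_le_one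
          (hK₁.posSemidef.diagonal_mul_mul_diagonal _)
          (hK₂.posSemidef.diagonal_mul_mul_diagonal _)]
    _ = √((a₁ * b₁) / (a₀ * b₀)) := by
        rw [Real.sqrt_div' _ (by positivity), Real.sqrt_mul (ha₀.le.trans ha),
          Real.sqrt_mul ha₀.le]
        field_simp

/-- Let `D₁`, `D₂` be diagonal matrices with diagonal entries in
`[a₀, a₁]` and `[b₀, b₁]` respectively (`0 < a₀ ≤ a₁`, `0 < b₀ ≤ b₁`), and let
`K₁`, `K₂` be symmetric positive definite. With `K_A = K₁ ⊗ D₂` and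
`K_B = D₁ ⊗ K₂`, the matrix `K_A + K_B` is invertible and
`‖K_A (K_A + K_B)⁻¹‖₂ ≤ √((a₁ b₁)/(a₀ b₀))` in the Euclidean operator norm. -/
theorem kronecker_stability_bound
    (N M : ℕ) (hN : 1 ≤ N) (hM : 1 ≤ M)
    (a₀ a₁ b₀ b₁ : ℝ) (ha₀ : 0 < a₀) (ha : a₀ ≤ a₁) (hb₀ : 0 < b₀) (hb : b₀ ≤ b₁)
    (d₁ : Fin N → ℝ) (hd₁ : ∀ i, d₁ i ∈ Set.Icc a₀ a₁)
    (d₂ : Fin M → ℝ) (hd₂ : ∀ j, d₂ j ∈ Set.Icc b₀ b₁)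
    (K₁ : Matrix (Fin N) (Fin N) ℝ) (hK₁ : K₁.PosDef)
    (K₂ : Matrix (Fin M) (Fin M) ℝ) (hK₂ : K₂.PosDef)
    (KA KB : Matrix (Fin N × Fin M) (Fin N × Fin M) ℝ)
    (hKA : KA = K₁ ⊗ₖ Matrix.diagonal d₂)
    (hKB : KB = Matrix.diagonal d₁ ⊗ₖ K₂) :
    IsUnit (KA + KB) ∧
      ‖Matrix.toEuclideanCLM (𝕜 := ℝ) (KA * (KA + KB)⁻¹)‖ ≤
        Real.sqrt ((a₁ * b₁) / (a₀ * b₀)) :=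
  kronecker_stability_bound_general N M a₀ a₁ b₀ b₁ ha₀ ha hb₀ d₁ hd₁ d₂ hd₂ K₁ hK₁ K₂ hK₂ KA KB hKA
    hKB
end

section
/- Let N, M ≥ 1, let D₁ be a real diagonal N×N matrix with strictly positive diagonal entries and D₂ a real diagonal M×M matrix with strictly positive diagonal entries, let K₁ be an invertible real N×N matrix and K₂ a real M×M matrix. Let D₁^{1/2}, D₂^{1/2} denote the entrywise square roots of D₁, D₂ and D^{1/2} = D₁^{1/2} ⊗ D₂^{1/2}. Then I + (D₁ K₁⁻¹) ⊗ (K₂ D₂⁻¹) = D^{1/2} · (I + (D₁^{-1/2} K₁ D₁^{-1/2})⁻¹ ⊗ (D₂^{-1/2} K₂ D₂^{-1/2})) · (D^{1/2})⁻¹. Moreover, if additionally K₁ ⊗ D₂ and (K₁ ⊗ D₂) + (D₁ ⊗ K₂) are invertible, then (K₁ ⊗ D₂)((K₁ ⊗ D₂) + (D₁ ⊗ K₂))⁻¹ = (I + (D₁ K₁⁻¹) ⊗ (K₂ D₂⁻¹))⁻¹ whenever the latter inverse exists. -/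
open Matrix
open scoped Kronecker

/-!
Writing `P = D₁^{1/2}` and `Q = D₂^{1/2}`, so that `D₁ = P P` and `D₂ = Q Q`, conjugation by
`P ⊗ Q` acts factorwise on Kronecker products, and `(P⁻¹ K₁ P⁻¹)⁻¹ = P K₁⁻¹ P`; this gives the
similarity. For the second identity, `S (S + T)⁻¹ = ((S + T) S⁻¹)⁻¹ = (1 + T S⁻¹)⁻¹` for invertible
`S = K₁ ⊗ D₂`, and `(D₁ ⊗ K₂)(K₁ ⊗ D₂)⁻¹ = (D₁ K₁⁻¹) ⊗ (K₂ D₂⁻¹)`.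
-/

namespace Matrix

variable {m n : Type*} [Fintype m] [DecidableEq m] [Fintype n] [DecidableEq n]

section CommRing

variable {R : Type*} [CommRing R]

theorem kronecker_mul_inv_kronecker (A C : Matrix m m R) (B D : Matrix n n R) :
    A ⊗ₖ B * (C ⊗ₖ D)⁻¹ = (A * C⁻¹) ⊗ₖ (B * D⁻¹) := by
  rw [inv_kronecker, ← mul_kronecker_mul]

theorem kronecker_conj_one_add {P : Matrix m m R} {Q : Matrix n n R} (hP : IsUnit P.det)
    (hQ : IsUnit Q.det) (X : Matrix m m R) (Y : Matrix n n R) :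
    P ⊗ₖ Q * (1 + X ⊗ₖ Y) * (P ⊗ₖ Q)⁻¹ = 1 + (P * X * P⁻¹) ⊗ₖ (Q * Y * Q⁻¹) := by
  rw [mul_add, mul_one, add_mul, ← mul_kronecker_mul, kronecker_mul_inv_kronecker,
    kronecker_mul_inv_kronecker, mul_nonsing_inv P hP, mul_nonsing_inv Q hQ, one_kronecker_one]

theorem inv_inv_mul_mul_inv {P : Matrix m m R} (hP : IsUnit P.det) (A : Matrix m m R) :
    (P⁻¹ * A * P⁻¹)⁻¹ = P * A⁻¹ * P := by
  rw [mul_inv_rev, mul_inv_rev, nonsing_inv_nonsing_inv P hP, mul_assoc]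

theorem one_add_kronecker_eq_conj {P : Matrix m m R} {Q : Matrix n n R} (hP : IsUnit P.det)
    (hQ : IsUnit Q.det) (A : Matrix m m R) (B : Matrix n n R) :
    1 + (P * P * A⁻¹) ⊗ₖ (B * (Q * Q)⁻¹) =
      P ⊗ₖ Q * (1 + (P⁻¹ * A * P⁻¹)⁻¹ ⊗ₖ (Q⁻¹ * B * Q⁻¹)) * (P ⊗ₖ Q)⁻¹ := by
  rw [kronecker_conj_one_add hP hQ, inv_inv_mul_mul_inv hP, mul_inv_rev]
  simp only [mul_assoc, mul_nonsing_inv_cancel_left _ _ hQ, mul_nonsing_inv _ hP, mul_one]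

theorem mul_inv_add_eq_inv_one_add {S : Matrix m m R} (hS : IsUnit S.det) (T : Matrix m m R) :
    S * (S + T)⁻¹ = (1 + T * S⁻¹)⁻¹ := by
  have h : 1 + T * S⁻¹ = (S + T) * S⁻¹ := by rw [add_mul, mul_nonsing_inv S hS]
  rw [h, mul_inv_rev, nonsing_inv_nonsing_inv S hS]

end CommRing

section Field

variable {K : Type*} [Field K] {v : n → K}

theorem isUnit_det_diagonal (hv : ∀ i, v i ≠ 0) : IsUnit (diagonal v).det := by
  rw [det_diagonal, isUnit_iff_ne_zero]
  exact Finset.prod_ne_zero_iff.mpr fun i _ => hv i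

theorem diagonal_inv_eq_inv_diagonal (hv : ∀ i, v i ≠ 0) :
    diagonal (fun i => (v i)⁻¹) = (diagonal v)⁻¹ := by
  refine (inv_eq_left_inv ?_).symm
  rw [diagonal_mul_diagonal]
  exact (congrArg diagonal (funext fun i => inv_mul_cancel₀ (hv i))).trans diagonal_one

end Field

theorem diagonal_sqrt_mul_self {v : n → ℝ} (hv : ∀ i, 0 ≤ v i) :
    diagonal (fun i => √(v i)) * diagonal (fun i => √(v i)) = diagonal v := by
  rw [diagonal_mul_diagonal]
  exact congrArg diagonal (funext fun i => Real.mul_self_sqrt (hv i))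

end Matrix

theorem kronecker_similarity_identities_general
    (N M : ℕ)
    (d₁ : Fin N → ℝ) (hd₁ : ∀ i, 0 < d₁ i)
    (d₂ : Fin M → ℝ) (hd₂ : ∀ j, 0 < d₂ j)
    (K₁ : Matrix (Fin N) (Fin N) ℝ)
    (K₂ : Matrix (Fin M) (Fin M) ℝ)
    (D₁ : Matrix (Fin N) (Fin N) ℝ) (hD₁ : D₁ = Matrix.diagonal d₁)
    (D₂ : Matrix (Fin M) (Fin M) ℝ) (hD₂ : D₂ = Matrix.diagonal d₂)
    (D₁h : Matrix (Fin N) (Fin N) ℝ) (hD₁h : D₁h = Matrix.diagonal fun i => Real.sqrt (d₁ i))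
    (D₂h : Matrix (Fin M) (Fin M) ℝ) (hD₂h : D₂h = Matrix.diagonal fun j => Real.sqrt (d₂ j))
    (D₁mh : Matrix (Fin N) (Fin N) ℝ)
    (hD₁mh : D₁mh = Matrix.diagonal fun i => (Real.sqrt (d₁ i))⁻¹)
    (D₂mh : Matrix (Fin M) (Fin M) ℝ)
    (hD₂mh : D₂mh = Matrix.diagonal fun j => (Real.sqrt (d₂ j))⁻¹)
    (Dh : Matrix (Fin N × Fin M) (Fin N × Fin M) ℝ) (hDh : Dh = D₁h ⊗ₖ D₂h) :
    (1 : Matrix (Fin N × Fin M) (Fin N × Fin M) ℝ) + (D₁ * K₁⁻¹) ⊗ₖ (K₂ * D₂⁻¹) =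
        Dh * (1 + (D₁mh * K₁ * D₁mh)⁻¹ ⊗ₖ (D₂mh * K₂ * D₂mh)) * Dh⁻¹ ∧
      (IsUnit (K₁ ⊗ₖ D₂) → IsUnit (K₁ ⊗ₖ D₂ + D₁ ⊗ₖ K₂) →
        IsUnit ((1 : Matrix (Fin N × Fin M) (Fin N × Fin M) ℝ) +
          (D₁ * K₁⁻¹) ⊗ₖ (K₂ * D₂⁻¹)) →
        (K₁ ⊗ₖ D₂) * (K₁ ⊗ₖ D₂ + D₁ ⊗ₖ K₂)⁻¹ =
          ((1 : Matrix (Fin N × Fin M) (Fin N × Fin M) ℝ) +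
            (D₁ * K₁⁻¹) ⊗ₖ (K₂ * D₂⁻¹))⁻¹) := by
  refine ⟨?_, fun hS _ _ => ?_⟩
  · have hs₁ : ∀ i, √(d₁ i) ≠ 0 := fun i => (Real.sqrt_pos.mpr (hd₁ i)).ne'
    have hs₂ : ∀ j, √(d₂ j) ≠ 0 := fun j => (Real.sqrt_pos.mpr (hd₂ j)).ne'
    subst hD₁ hD₂ hD₁h hD₂h hD₁mh hD₂mh hDh
    rw [diagonal_inv_eq_inv_diagonal hs₁, diagonal_inv_eq_inv_diagonal hs₂,
      ← diagonal_sqrt_mul_self fun i => (hd₁ i).le, ← diagonal_sqrt_mul_self fun j => (hd₂ j).le]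
    exact one_add_kronecker_eq_conj (isUnit_det_diagonal hs₁) (isUnit_det_diagonal hs₂) K₁ K₂
  · rw [mul_inv_add_eq_inv_one_add ((isUnit_iff_isUnit_det _).mp hS), kronecker_mul_inv_kronecker]

/-- Kronecker-product similarity identities: with entrywise
square roots `D₁^{1/2}`, `D₂^{1/2}` and `D^{1/2} = D₁^{1/2} ⊗ D₂^{1/2}`,
`I + (D₁K₁⁻¹) ⊗ (K₂D₂⁻¹) = D^{1/2} (I + (D₁^{-1/2}K₁D₁^{-1/2})⁻¹ ⊗ (D₂^{-1/2}K₂D₂^{-1/2})) (D^{1/2})⁻¹`,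
and, if `K₁ ⊗ D₂` and `(K₁ ⊗ D₂) + (D₁ ⊗ K₂)` are invertible, then
`(K₁ ⊗ D₂)((K₁ ⊗ D₂) + (D₁ ⊗ K₂))⁻¹ = (I + (D₁K₁⁻¹) ⊗ (K₂D₂⁻¹))⁻¹`
whenever the latter inverse exists. -/
theorem kronecker_similarity_identities
    (N M : ℕ) (hN : 1 ≤ N) (hM : 1 ≤ M)
    (d₁ : Fin N → ℝ) (hd₁ : ∀ i, 0 < d₁ i)
    (d₂ : Fin M → ℝ) (hd₂ : ∀ j, 0 < d₂ j)
    (K₁ : Matrix (Fin N) (Fin N) ℝ) (hK₁ : IsUnit K₁)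
    (K₂ : Matrix (Fin M) (Fin M) ℝ)
    (D₁ : Matrix (Fin N) (Fin N) ℝ) (hD₁ : D₁ = Matrix.diagonal d₁)
    (D₂ : Matrix (Fin M) (Fin M) ℝ) (hD₂ : D₂ = Matrix.diagonal d₂)
    (D₁h : Matrix (Fin N) (Fin N) ℝ) (hD₁h : D₁h = Matrix.diagonal fun i => Real.sqrt (d₁ i))
    (D₂h : Matrix (Fin M) (Fin M) ℝ) (hD₂h : D₂h = Matrix.diagonal fun j => Real.sqrt (d₂ j))
    (D₁mh : Matrix (Fin N) (Fin N) ℝ)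
    (hD₁mh : D₁mh = Matrix.diagonal fun i => (Real.sqrt (d₁ i))⁻¹)
    (D₂mh : Matrix (Fin M) (Fin M) ℝ)
    (hD₂mh : D₂mh = Matrix.diagonal fun j => (Real.sqrt (d₂ j))⁻¹)
    (Dh : Matrix (Fin N × Fin M) (Fin N × Fin M) ℝ) (hDh : Dh = D₁h ⊗ₖ D₂h) :
    (1 : Matrix (Fin N × Fin M) (Fin N × Fin M) ℝ) + (D₁ * K₁⁻¹) ⊗ₖ (K₂ * D₂⁻¹) =
        Dh * (1 + (D₁mh * K₁ * D₁mh)⁻¹ ⊗ₖ (D₂mh * K₂ * D₂mh)) * Dh⁻¹ ∧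
      (IsUnit (K₁ ⊗ₖ D₂) → IsUnit (K₁ ⊗ₖ D₂ + D₁ ⊗ₖ K₂) →
        IsUnit ((1 : Matrix (Fin N × Fin M) (Fin N × Fin M) ℝ) +
          (D₁ * K₁⁻¹) ⊗ₖ (K₂ * D₂⁻¹)) →
        (K₁ ⊗ₖ D₂) * (K₁ ⊗ₖ D₂ + D₁ ⊗ₖ K₂)⁻¹ =
          ((1 : Matrix (Fin N × Fin M) (Fin N × Fin M) ℝ) +
            (D₁ * K₁⁻¹) ⊗ₖ (K₂ * D₂⁻¹))⁻¹) :=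
  kronecker_similarity_identities_general N M d₁ hd₁ d₂ hd₂ K₁ K₂ D₁ hD₁ D₂ hD₂ D₁h hD₁h D₂h hD₂h
    D₁mh hD₁mh D₂mh hD₂mh Dh hDh
end

section
/- Let a, b, c, d ∈ ℝ and define the bilinear function v : [0,1]² → ℝ by v(x, y) = a(1−x)(1−y) + b x(1−y) + c (1−x)y + d xy. Then (1/36)(a² + b² + c² + d²) ≤ ∫₀¹∫₀¹ v(x,y)² dx dy ≤ (1/4)(a² + b² + c² + d²). In particular, since the trapezoidal quadrature value of v² on the unit square equals (1/4)(a² + b² + c² + d²), the quadrature norm and the L² norm are uniformly equivalent on each bilinear finite element. -/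
/-!
On each axis the `P1` mass matrix is `[[2, 1], [1, 2]] / 6`, with eigenvalues `1/2` (on `(1, 1)`) and
`1/6` (on `(1, -1)`). The `L²` Gram form of the bilinear element in the nodal values `a, b, c, d` is
its tensor square, so its eigenvalues are the products `1/4, 1/12, 1/12, 1/36`, while the
trapezoidal rule just returns a quarter of the sum of squares of the nodal values.
-/

open intervalIntegral

/-- The `L²(0,1)²` norm squared of the bilinear function with nodal values `a, b, c, d`. -/
noncomputable def bilinearMass (a b c d : ℝ) : ℝ :=
  (4 * (a ^ 2 + b ^ 2 + c ^ 2 + d ^ 2) + 4 * (a * b + a * c + b * d + c * d) + 2 * (a * d + b * c)) / 36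

theorem integral_affine_mul_affine (α β γ δ : ℝ) :
    ∫ x in (0:ℝ)..1, (α * (1 - x) + β * x) * (γ * (1 - x) + δ * x) =
      (2 * α * γ + α * δ + β * γ + 2 * β * δ) / 6 := by
  have expand : ∀ x : ℝ, (α * (1 - x) + β * x) * (γ * (1 - x) + δ * x) =
      α * γ + (α * (δ - γ) + γ * (β - α)) * x + (β - α) * (δ - γ) * x ^ 2 := fun x => by ring
  simp only [expand]
  rw [integral_add (Continuous.intervalIntegrable (by fun_prop) _ _)
      (Continuous.intervalIntegrable (by fun_prop) _ _),
    integral_add (Continuous.intervalIntegrable (by fun_prop) _ _)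
      (Continuous.intervalIntegrable (by fun_prop) _ _),
    integral_const, integral_const_mul, integral_const_mul, integral_id, integral_pow]
  norm_num
  ring

theorem integral_sq_bilinear {a b c d : ℝ} {v : ℝ → ℝ → ℝ}
    (hv : ∀ x y : ℝ,
      v x y = a * (1 - x) * (1 - y) + b * x * (1 - y) + c * (1 - x) * y + d * x * y) :
    ∫ x in (0:ℝ)..1, ∫ y in (0:ℝ)..1, (v x y) ^ 2 = bilinearMass a b c d := by
  set p : ℝ → ℝ := fun x => a * (1 - x) + b * x
  set q : ℝ → ℝ := fun x => c * (1 - x) + d * x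
  have inner : ∀ x, ∫ y in (0:ℝ)..1, (v x y) ^ 2 = (p x * p x + p x * q x + q x * q x) / 3 := by
    intro x
    have slice : ∀ y, (v x y) ^ 2 = (p x * (1 - y) + q x * y) * (p x * (1 - y) + q x * y) := by
      intro y; rw [hv]; ring
    simp only [slice, integral_affine_mul_affine]
    ring
  simp only [inner]
  rw [integral_div,
    integral_add (Continuous.intervalIntegrable (by fun_prop) _ _)
      (Continuous.intervalIntegrable (by fun_prop) _ _),
    integral_add (Continuous.intervalIntegrable (by fun_prop) _ _)
      (Continuous.intervalIntegrable (by fun_prop) _ _)]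
  simp only [p, q, integral_affine_mul_affine, bilinearMass]
  ring

theorem bilinearMass_eq_spectral (a b c d : ℝ) :
    bilinearMass a b c d =
      (9 * (a + b + c + d) ^ 2 + 3 * (a + b - c - d) ^ 2 + 3 * (a - b + c - d) ^ 2
        + (a - b - c + d) ^ 2) / 144 := by
  unfold bilinearMass; ring

theorem sum_sq_eq_spectral (a b c d : ℝ) :
    a ^ 2 + b ^ 2 + c ^ 2 + d ^ 2 =
      ((a + b + c + d) ^ 2 + (a + b - c - d) ^ 2 + (a - b + c - d) ^ 2
        + (a - b - c + d) ^ 2) / 4 := by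
  ring

theorem one_div_36_mul_sum_sq_le_bilinearMass (a b c d : ℝ) :
    (1 / 36) * (a ^ 2 + b ^ 2 + c ^ 2 + d ^ 2) ≤ bilinearMass a b c d := by
  rw [bilinearMass_eq_spectral, sum_sq_eq_spectral]
  nlinarith [sq_nonneg (a + b + c + d), sq_nonneg (a + b - c - d), sq_nonneg (a - b + c - d)]

theorem bilinearMass_le_one_div_four_mul_sum_sq (a b c d : ℝ) :
    bilinearMass a b c d ≤ (1 / 4) * (a ^ 2 + b ^ 2 + c ^ 2 + d ^ 2) := by
  rw [bilinearMass_eq_spectral, sum_sq_eq_spectral]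
  nlinarith [sq_nonneg (a + b - c - d), sq_nonneg (a - b + c - d), sq_nonneg (a - b - c + d)]

/-- For the bilinear function
`v(x,y) = a(1-x)(1-y) + bx(1-y) + c(1-x)y + dxy` on the unit square,
`(1/36)(a² + b² + c² + d²) ≤ ∫₀¹∫₀¹ v² ≤ (1/4)(a² + b² + c² + d²)`, and the
trapezoidal quadrature value of `v²` on the unit square equals
`(1/4)(a² + b² + c² + d²)`: the quadrature norm and the `L²` norm are uniformly
equivalent on each bilinear finite element. -/
theorem bilinear_element_norm_equivalence
    (a b c d : ℝ) (v : ℝ → ℝ → ℝ)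
    (hv : ∀ x y : ℝ,
      v x y = a * (1 - x) * (1 - y) + b * x * (1 - y) + c * (1 - x) * y + d * x * y) :
    (1 / 36) * (a ^ 2 + b ^ 2 + c ^ 2 + d ^ 2) ≤
        (∫ x in (0:ℝ)..1, ∫ y in (0:ℝ)..1, (v x y) ^ 2) ∧
      (∫ x in (0:ℝ)..1, ∫ y in (0:ℝ)..1, (v x y) ^ 2) ≤
        (1 / 4) * (a ^ 2 + b ^ 2 + c ^ 2 + d ^ 2) ∧
      (1 / 4) * ((v 0 0) ^ 2 + (v 1 0) ^ 2 + (v 0 1) ^ 2 + (v 1 1) ^ 2) =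
        (1 / 4) * (a ^ 2 + b ^ 2 + c ^ 2 + d ^ 2) := by
  rw [integral_sq_bilinear hv]
  refine ⟨one_div_36_mul_sum_sq_le_bilinearMass a b c d,
    bilinearMass_le_one_div_four_mul_sum_sq a b c d, ?_⟩
  simp only [hv]
  ring
end
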